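/- arXiv:1912.01778 — 3 statements merged into one kernel-verified Lean document; each statement's English description precedes it below -/
import Mathlib

section
/- Suppose all agents have opinions in $[1/2, 1]$ and $b_i \ge 1$. Then the biased assimilation update is nondecreasing for each agent: $x_i(k+1) \ge x_i(k)$ for every $i$. Moreover, the inequality is strict if some neighbor $j \in N_i$ has $x_j(k) > 1/2$ and $x_i(k) < 1$. -/
open Finset Filter Topology

/-- Weighted sum of neighbors' opinions: `s_i = ∑_{j ∈ N_i} w_{ij} x_j`. -/
noncomputable def wsum {N : ℕ} (w : Fin N → Fin N → ℝ) (Nbr : Fin N → Finset (Fin N))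
    (x : Fin N → ℝ) (i : Fin N) : ℝ :=
  ∑ j ∈ Nbr i, w i j * x j

/-- Weighted degree `d_i = ∑_{j ∈ N_i} w_{ij}`. -/
noncomputable def degw {N : ℕ} (w : Fin N → Fin N → ℝ) (Nbr : Fin N → Finset (Fin N))
    (i : Fin N) : ℝ :=
  ∑ j ∈ Nbr i, w i j

/-- Biased assimilation update map (componentwise). Powers are real powers. -/
noncomputable def F {N : ℕ} (w : Fin N → Fin N → ℝ) (Nbr : Fin N → Finset (Fin N))
    (b : Fin N → ℝ) (x : Fin N → ℝ) (i : Fin N) : ℝ :=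
  (w i i * x i + x i ^ b i * wsum w Nbr x i) /
    (w i i + x i ^ b i * wsum w Nbr x i + (1 - x i) ^ b i * (degw w Nbr i - wsum w Nbr x i))

/-- The directed influence graph (edge `j → i` iff `j ∈ Nbr i`) is strongly connected. -/
def StronglyConnected {N : ℕ} (Nbr : Fin N → Finset (Fin N)) : Prop :=
  ∀ i j : Fin N, Relation.TransGen (fun a c => a ∈ Nbr c) i j

/-- Lyapunov stability of a fixed point of the discrete-time system `x⁺ = G x`. -/
def LyapStable {E : Type*} [NormedAddCommGroup E] (G : E → E) (q : E) : Prop :=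
  ∀ ε > 0, ∃ δ > 0, ∀ x, ‖x - q‖ < δ → ∀ k : ℕ, ‖G^[k] x - q‖ < ε

/-- Local exponential stability of a fixed point of `x⁺ = G x`. -/
def LocExpStable {E : Type*} [NormedAddCommGroup E] (G : E → E) (q : E) : Prop :=
  ∃ δ > 0, ∃ C > 0, ∃ r, 0 ≤ r ∧ r < 1 ∧
    ∀ x, ‖x - q‖ ≤ δ → ∀ k : ℕ, ‖G^[k] x - q‖ ≤ C * r ^ k * ‖x - q‖

/-- Spectral radius of a real square matrix: supremum of moduli of its complex eigenvalues. -/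
noncomputable def specRad {n : ℕ} (M : Matrix (Fin n) (Fin n) ℝ) : ℝ :=
  sSup {r : ℝ | ∃ μ : ℂ, (M.map (fun a => (a : ℂ))).charpoly.IsRoot μ ∧ r = ‖μ‖}

/-!
With `s` the weighted opinion of the neighbours and `r = d - s` their weighted dissent, the
denominator of the update times `F - x` is `x ^ b (1 - x) s - (1 - x) ^ b x r`. For
`1/2 ≤ x ≤ 1` we have `r ≤ s`, as every neighbour's opinion is at least `1/2`, and
`(1 - x) ^ b x ≤ x ^ b (1 - x)`, as `(1 - x) ^ (b - 1) ≤ x ^ (b - 1)`. So the difference is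
nonnegative, and positive once `r < s` and `x < 1`.
-/

theorem Real.rpow_mul_le_rpow_mul_of_le {x y b : ℝ} (hy : 0 ≤ y) (hyx : y ≤ x) (hb : 1 ≤ b) :
    y ^ b * x ≤ x ^ b * y := by
  have hsplit : ∀ z : ℝ, 0 ≤ z → z ^ b = z ^ (b - 1) * z := fun z hz => by
    simpa using Real.rpow_add_one' hz (y := b - 1)
      (by rw [sub_add_cancel]; exact (zero_lt_one.trans_le hb).ne')
  rw [hsplit y hy, hsplit x (hy.trans hyx)]
  calc y ^ (b - 1) * y * x = y ^ (b - 1) * (x * y) := by ring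
    _ ≤ x ^ (b - 1) * (x * y) := by
      gcongr
      exact mul_nonneg (hy.trans hyx) hy
    _ = x ^ (b - 1) * x * y := by ring

section AssimilationUpdate

variable {a b x s r : ℝ}

theorem assimilation_denom_pos (ha : 0 ≤ a) (hx : x ∈ Set.Icc (1/2 : ℝ) 1) (hr : 0 ≤ r)
    (hs : 0 < s) : 0 < a + x ^ b * s + (1 - x) ^ b * r := by
  have hxb : 0 < x ^ b := Real.rpow_pos_of_pos (by linarith [hx.1]) b
  have hyb : 0 ≤ (1 - x) ^ b := Real.rpow_nonneg (by linarith [hx.2]) b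
  positivity

theorem le_div_assimilation_denom_iff (hD : 0 < a + x ^ b * s + (1 - x) ^ b * r) :
    x ≤ (a * x + x ^ b * s) / (a + x ^ b * s + (1 - x) ^ b * r) ↔
      (1 - x) ^ b * x * r ≤ x ^ b * (1 - x) * s := by
  rw [le_div_iff₀ hD]
  constructor <;> intro h <;> linarith

theorem lt_div_assimilation_denom_iff (hD : 0 < a + x ^ b * s + (1 - x) ^ b * r) :
    x < (a * x + x ^ b * s) / (a + x ^ b * s + (1 - x) ^ b * r) ↔
      (1 - x) ^ b * x * r < x ^ b * (1 - x) * s := by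
  rw [lt_div_iff₀ hD]
  constructor <;> intro h <;> linarith

theorem one_sub_rpow_mul_le (hx : x ∈ Set.Icc (1/2 : ℝ) 1) (hb : 1 ≤ b) (hr : 0 ≤ r) :
    (1 - x) ^ b * x * r ≤ x ^ b * (1 - x) * r :=
  mul_le_mul_of_nonneg_right
    (Real.rpow_mul_le_rpow_mul_of_le (by linarith [hx.2]) (by linarith [hx.1]) hb) hr

theorem le_assimilation_update (ha : 0 ≤ a) (hx : x ∈ Set.Icc (1/2 : ℝ) 1) (hb : 1 ≤ b)
    (hr : 0 ≤ r) (hrs : r ≤ s) (hs : 0 < s) :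
    x ≤ (a * x + x ^ b * s) / (a + x ^ b * s + (1 - x) ^ b * r) := by
  rw [le_div_assimilation_denom_iff (assimilation_denom_pos ha hx hr hs)]
  have hc : 0 ≤ x ^ b * (1 - x) :=
    mul_nonneg (Real.rpow_nonneg (by linarith [hx.1]) b) (by linarith [hx.2])
  exact (one_sub_rpow_mul_le hx hb hr).trans (mul_le_mul_of_nonneg_left hrs hc)

theorem lt_assimilation_update (ha : 0 ≤ a) (hx : x ∈ Set.Icc (1/2 : ℝ) 1) (hx1 : x < 1)
    (hb : 1 ≤ b) (hr : 0 ≤ r) (hrs : r < s) :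
    x < (a * x + x ^ b * s) / (a + x ^ b * s + (1 - x) ^ b * r) := by
  rw [lt_div_assimilation_denom_iff (assimilation_denom_pos ha hx hr (hr.trans_lt hrs))]
  have hc : 0 < x ^ b * (1 - x) :=
    mul_pos (Real.rpow_pos_of_pos (by linarith [hx.1]) b) (by linarith)
  exact (one_sub_rpow_mul_le hx hb hr).trans_lt (mul_lt_mul_of_pos_left hrs hc)

end AssimilationUpdate

section Network

variable {N : ℕ} {w : Fin N → Fin N → ℝ} {Nbr : Fin N → Finset (Fin N)} {x : Fin N → ℝ}
  {i : Fin N}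

theorem degw_sub_wsum : degw w Nbr i - wsum w Nbr x i = ∑ j ∈ Nbr i, w i j * (1 - x j) := by
  rw [degw, wsum, ← Finset.sum_sub_distrib]
  exact Finset.sum_congr rfl fun j _ => by ring

theorem wsum_pos (hne : (Nbr i).Nonempty) (hw : ∀ j ∈ Nbr i, 0 < w i j)
    (hx : ∀ j ∈ Nbr i, 0 < x j) : 0 < wsum w Nbr x i :=
  Finset.sum_pos (fun j hj => mul_pos (hw j hj) (hx j hj)) hne

theorem degw_sub_wsum_nonneg (hw : ∀ j ∈ Nbr i, 0 ≤ w i j) (hx : ∀ j ∈ Nbr i, x j ≤ 1) :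
    0 ≤ degw w Nbr i - wsum w Nbr x i := by
  rw [degw_sub_wsum]
  exact Finset.sum_nonneg fun j hj => mul_nonneg (hw j hj) (by linarith [hx j hj])

theorem degw_sub_wsum_le_wsum (hw : ∀ j ∈ Nbr i, 0 ≤ w i j) (hx : ∀ j ∈ Nbr i, 1/2 ≤ x j) :
    degw w Nbr i - wsum w Nbr x i ≤ wsum w Nbr x i := by
  rw [degw_sub_wsum, wsum]
  exact Finset.sum_le_sum fun j hj =>
    mul_le_mul_of_nonneg_left (by linarith [hx j hj]) (hw j hj)

theorem degw_sub_wsum_lt_wsum (hw : ∀ j ∈ Nbr i, 0 < w i j) (hx : ∀ j ∈ Nbr i, 1/2 ≤ x j)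
    (hlt : ∃ j ∈ Nbr i, 1/2 < x j) : degw w Nbr i - wsum w Nbr x i < wsum w Nbr x i := by
  rw [degw_sub_wsum, wsum]
  obtain ⟨j, hj, hxj⟩ := hlt
  exact Finset.sum_lt_sum
    (fun k hk => mul_le_mul_of_nonneg_left (by linarith [hx k hk]) (hw k hk).le)
    ⟨j, hj, mul_lt_mul_of_pos_left (by linarith) (hw j hj)⟩

end Network

theorem stmt10 {N : ℕ} (w : Fin N → Fin N → ℝ) (Nbr : Fin N → Finset (Fin N)) (b : Fin N → ℝ)
    (hne : ∀ i, (Nbr i).Nonempty)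
    (hw : ∀ i, ∀ j ∈ Nbr i, 0 < w i j) (hwii : ∀ i, 0 ≤ w i i) (hb : ∀ i, 1 ≤ b i)
    (x : Fin N → ℝ) (hx : ∀ j, x j ∈ Set.Icc (1/2 : ℝ) 1) :
    (∀ i, x i ≤ F w Nbr b x i) ∧
    (∀ i, (∃ j ∈ Nbr i, 1/2 < x j) → x i < 1 → x i < F w Nbr b x i) := by
  have hwnn : ∀ i, ∀ j ∈ Nbr i, 0 ≤ w i j := fun i j hj => (hw i j hj).le
  have hr : ∀ i, 0 ≤ degw w Nbr i - wsum w Nbr x i := fun i =>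
    degw_sub_wsum_nonneg (hwnn i) fun j _ => (hx j).2
  refine ⟨fun i => ?_, fun i hlt hxi => ?_⟩
  · exact le_assimilation_update (hwii i) (hx i) (hb i) (hr i)
      (degw_sub_wsum_le_wsum (hwnn i) fun j _ => (hx j).1)
      (wsum_pos (hne i) (hw i) fun j _ => by linarith [(hx j).1])
  · exact lt_assimilation_update (hwii i) (hx i) hxi (hb i) (hr i)
      (degw_sub_wsum_lt_wsum (hw i) (fun j _ => (hx j).1) hlt)
end

section
/- For the biased assimilation model on the undirected complete graph with unit weights and $b_i > 1$ for all $i$, at the polarization fixed point with $n_1$ agents at $0$ and $n_2 = N-n_1$ agents at $1$ (where $2 \le n_1 \le N-2$), the Jacobian is diagonal with entries $w_{ii}/(w_{ii} + d_i^{(0)})$ for agents at $0$ and $w_{ii}/(w_{ii} + d_i^{(1)})$ for agents at $1$, all lying in $[0,1)$; hence the polarization equilibrium is locally exponentially stable. -/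
/-
Because every `b i > 1`, the factors `x_i ^ b_i` and `(1 - x_i) ^ b_i` vanish to first order
wherever they vanish, so at a profile in `{0, 1}ᴺ` the opinions of the neighbours drop out of the
linearisation of `F`: its Jacobian is diagonal, with entry `w_ii / (w_ii + d)` at agent `i`, where
`d > 0` is the weight of the neighbours sharing the opinion of `i` (`n1 - 1` or `N - n1 - 1` on the
complete graph). These entries lie in `[0, 1)`, so the derivative is a contraction for the sup norm,
and a fixed point with a contracting derivative is locally exponentially stable.
-/

open Finset Filter Topology

section Calculus

variable {𝕜 E : Type*} [NontriviallyNormedField 𝕜] [NormedAddCommGroup E] [NormedSpace 𝕜 E]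
  {c d e : E → 𝕜} {c' e' : E →L[𝕜] 𝕜} {x : E}

theorem HasFDerivAt.div_of_eq_zero (hc : HasFDerivAt c c' x) (hd : DifferentiableAt 𝕜 d x)
    (hcx : c x = 0) (hdx : d x ≠ 0) :
    HasFDerivAt (fun y => c y / d y) ((d x)⁻¹ • c') x := by
  simp_rw [div_eq_mul_inv]
  refine (hc.fun_mul (hd.fun_inv hdx).hasFDerivAt).congr_fderiv ?_
  ext v
  simp [hcx]

theorem HasFDerivAt.div_add_of_eq_zero (hc : HasFDerivAt c c' x) (he : HasFDerivAt e e' x)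
    (hex : e x = 0) (hcx : c x ≠ 0) :
    HasFDerivAt (fun y => c y / (c y + e y)) (-(c x)⁻¹ • e') x := by
  have hinv := (hasDerivAt_inv (by simpa [hex])).comp_hasFDerivAt x (hc.add he)
  simp_rw [div_eq_mul_inv]
  refine (hc.fun_mul hinv).congr_fderiv ?_
  ext v
  simp only [Pi.add_apply, hex, add_zero, smul_add, neg_smul, smul_neg, Function.comp_apply,
    add_apply, neg_apply, smul_apply, smul_eq_mul, neg_mul]
  field_simp
  ring

end Calculus

theorem HasFDerivAt.rpow_const_of_eq_zero {E : Type*} [NormedAddCommGroup E] [NormedSpace ℝ E]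
    {f : E → ℝ} {f' : E →L[ℝ] ℝ} {x : E} {p : ℝ} (hf : HasFDerivAt f f' x) (hfx : f x = 0)
    (hp : 1 < p) : HasFDerivAt (fun y => f y ^ p) (0 : E →L[ℝ] ℝ) x := by
  simpa [Function.comp_def, hfx, Real.zero_rpow (sub_ne_zero.2 hp.ne')] using
    (Real.hasDerivAt_rpow_const (x := f x) (Or.inr hp.le)).comp_hasFDerivAt x hf

theorem locExpStable_of_local_contraction {E : Type*} [NormedAddCommGroup E] {G : E → E} {q : E}
    {δ ρ : ℝ} (hδ : 0 < δ) (hρ₀ : 0 ≤ ρ) (hρ₁ : ρ < 1)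
    (hG : ∀ z, ‖z - q‖ ≤ δ → ‖G z - q‖ ≤ ρ * ‖z - q‖) : LocExpStable G q := by
  refine ⟨δ, hδ, 1, one_pos, ρ, hρ₀, hρ₁, fun z hz k => ?_⟩
  rw [one_mul]
  induction k with
  | zero => simp
  | succ k ih =>
    have hk : ‖G^[k] z - q‖ ≤ δ :=
      ih.trans <| (mul_le_of_le_one_left (norm_nonneg _) (pow_le_one₀ hρ₀ hρ₁.le)).trans hz
    calc ‖G^[k + 1] z - q‖ = ‖G (G^[k] z) - q‖ := by rw [Function.iterate_succ_apply']
      _ ≤ ρ * ‖G^[k] z - q‖ := hG _ hk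
      _ ≤ ρ * (ρ ^ k * ‖z - q‖) := mul_le_mul_of_nonneg_left ih hρ₀
      _ = ρ ^ (k + 1) * ‖z - q‖ := by ring

section Stability

variable {𝕜 E : Type*} [NontriviallyNormedField 𝕜] [NormedAddCommGroup E] [NormedSpace 𝕜 E]
  {G : E → E} {q : E}

theorem exists_local_contraction_of_hasFDerivAt {L : E →L[𝕜] E} (hG : HasFDerivAt G L q)
    (hq : G q = q) (hL : ‖L‖ < 1) :
    ∃ δ > 0, ∃ ρ, 0 ≤ ρ ∧ ρ < 1 ∧ ∀ z, ‖z - q‖ ≤ δ → ‖G z - q‖ ≤ ρ * ‖z - q‖ := by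
  obtain ⟨δ, hδ, hlin⟩ := Metric.eventually_nhds_iff.1 <|
    hG.isLittleO.def (show 0 < (1 - ‖L‖) / 2 by linarith)
  refine ⟨δ / 2, by positivity, (1 + ‖L‖) / 2, by positivity, by linarith, fun z hz => ?_⟩
  have hrem : ‖G z - G q - L (z - q)‖ ≤ (1 - ‖L‖) / 2 * ‖z - q‖ := by
    simpa using hlin (show dist z q < δ by rw [dist_eq_norm]; linarith)
  calc ‖G z - q‖ = ‖(G z - G q - L (z - q)) + L (z - q)‖ := by rw [hq]; abel_nf
    _ ≤ (1 - ‖L‖) / 2 * ‖z - q‖ + ‖L‖ * ‖z - q‖ :=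
        (norm_add_le _ _).trans (add_le_add hrem (L.le_opNorm _))
    _ = (1 + ‖L‖) / 2 * ‖z - q‖ := by ring

theorem locExpStable_of_hasFDerivAt {L : E →L[𝕜] E} (hG : HasFDerivAt G L q) (hq : G q = q)
    (hL : ‖L‖ < 1) : LocExpStable G q := by
  obtain ⟨δ, hδ, ρ, hρ₀, hρ₁, hcontr⟩ := exists_local_contraction_of_hasFDerivAt hG hq hL
  exact locExpStable_of_local_contraction hδ hρ₀ hρ₁ hcontr

end Stability

theorem ContinuousLinearMap.norm_pi_smul_proj_lt_one {𝕜 ι : Type*} [NontriviallyNormedField 𝕜]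
    [Fintype ι] {a : ι → 𝕜} (ha : ∀ i, ‖a i‖ < 1) :
    ‖ContinuousLinearMap.pi fun i =>
      a i • ContinuousLinearMap.proj (R := 𝕜) (φ := fun _ : ι => 𝕜) i‖ < 1 := by
  refine lt_of_le_of_lt (norm_pi_le_of_le (fun i => ?_) (norm_nonneg a))
    ((pi_norm_lt_iff zero_lt_one).2 ha)
  have hproj : ‖ContinuousLinearMap.proj (R := 𝕜) (φ := fun _ : ι => 𝕜) i‖ ≤ 1 := by
    refine opNorm_le_bound _ zero_le_one fun v => ?_
    rw [one_mul]
    exact norm_le_pi_norm v i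
  calc _ ≤ ‖a i‖ * ‖ContinuousLinearMap.proj (R := 𝕜) (φ := fun _ : ι => 𝕜) i‖ :=
        norm_smul_le _ _
    _ ≤ ‖a i‖ := mul_le_of_le_one_right (norm_nonneg _) hproj
    _ ≤ ‖a‖ := norm_le_pi_norm a i

theorem div_add_mem_Ico {a d : ℝ} (ha : 0 ≤ a) (hd : 0 < d) : a / (a + d) ∈ Set.Ico 0 1 :=
  ⟨div_nonneg ha (by linarith), (div_lt_one (by linarith)).2 (by linarith)⟩

theorem sum_eq_card_sub_card_filter_eq_zero {ι : Type*} [Fintype ι] {x : ι → ℝ}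
    (hx : ∀ i, x i = 0 ∨ x i = 1) :
    ∑ j, x j = ((Fintype.card ι - #{j | x j = 0} : ℕ) : ℝ) := by
  have hx' : ∀ j, x j = if x j = 0 then 0 else 1 := fun j => by
    rcases hx j with h | h <;> simp [h]
  have hcard := Finset.card_filter_add_card_filter_not (s := univ) (fun j => x j = 0)
  rw [Finset.card_univ] at hcard
  rw [Finset.sum_congr rfl fun j _ => hx' j, Finset.sum_ite, Finset.sum_const_zero, zero_add,
    Finset.sum_const, nsmul_one, ← hcard, Nat.add_sub_cancel_left]

section BiasedAssimilation

variable {N : ℕ} {w : Fin N → Fin N → ℝ} {Nbr : Fin N → Finset (Fin N)} {b : Fin N → ℝ}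
  {x : Fin N → ℝ} {i : Fin N}

theorem differentiable_wsum (w : Fin N → Fin N → ℝ) (Nbr : Fin N → Finset (Fin N)) (i : Fin N) :
    Differentiable ℝ fun y => wsum w Nbr y i := by
  unfold wsum
  fun_prop

theorem F_apply_of_eq_zero (hb : b i ≠ 0) (hxi : x i = 0) : F w Nbr b x i = 0 := by
  simp [F, hxi, Real.zero_rpow hb]

theorem F_apply_of_eq_one (hb : b i ≠ 0) (hxi : x i = 1) (hD : w i i + wsum w Nbr x i ≠ 0) :
    F w Nbr b x i = 1 := by
  simp [F, hxi, Real.zero_rpow hb, div_self hD]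

theorem hasFDerivAt_F_of_eq_zero (hb : 1 < b i) (hxi : x i = 0)
    (hD : w i i + (degw w Nbr i - wsum w Nbr x i) ≠ 0) :
    HasFDerivAt (fun y => F w Nbr b y i)
      ((w i i / (w i i + (degw w Nbr i - wsum w Nbr x i))) •
        ContinuousLinearMap.proj (R := ℝ) (φ := fun _ : Fin N => ℝ) i) x := by
  have hproj := hasFDerivAt_apply (𝕜 := ℝ) (F' := fun _ : Fin N => ℝ) i x
  have hzero : (0 : ℝ) ^ b i = 0 := Real.zero_rpow (zero_lt_one.trans hb).ne'
  have hnum : HasFDerivAt (fun y => w i i * y i + y i ^ b i * wsum w Nbr y i)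
      (w i i • ContinuousLinearMap.proj (R := ℝ) (φ := fun _ : Fin N => ℝ) i) x := by
    have := (hproj.const_mul (w i i)).add
      ((hproj.rpow_const_of_eq_zero hxi hb).fun_mul (differentiable_wsum w Nbr i x).hasFDerivAt)
    refine this.congr_fderiv ?_
    ext v
    simp [hxi, hzero]
  have hden : DifferentiableAt ℝ (fun y : Fin N → ℝ => w i i + y i ^ b i * wsum w Nbr y i +
      (1 - y i) ^ b i * (degw w Nbr i - wsum w Nbr y i)) x := by
    have := differentiable_wsum w Nbr i x
    fun_prop (disch := exact Or.inr hb.le)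
  refine (hnum.div_of_eq_zero hden (by simp [hxi, hzero])
    (by simpa [hxi, hzero] using hD)).congr_fderiv ?_
  simp [hxi, hzero, smul_smul, div_eq_inv_mul]

theorem hasFDerivAt_F_of_eq_one (hb : 1 < b i) (hxi : x i = 1) (hD : w i i + wsum w Nbr x i ≠ 0) :
    HasFDerivAt (fun y => F w Nbr b y i)
      ((w i i / (w i i + wsum w Nbr x i)) •
        ContinuousLinearMap.proj (R := ℝ) (φ := fun _ : Fin N => ℝ) i) x := by
  have hproj := hasFDerivAt_apply (𝕜 := ℝ) (F' := fun _ : Fin N => ℝ) i x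
  have hzero : (0 : ℝ) ^ b i = 0 := Real.zero_rpow (zero_lt_one.trans hb).ne'
  have hS := differentiable_wsum w Nbr i x
  have hnum : DifferentiableAt ℝ
      (fun y : Fin N → ℝ => w i i * y i + y i ^ b i * wsum w Nbr y i) x := by
    fun_prop (disch := exact Or.inr hb.le)
  have hrest : HasFDerivAt
      (fun y => w i i * (1 - y i) + (1 - y i) ^ b i * (degw w Nbr i - wsum w Nbr y i))
      (-w i i • ContinuousLinearMap.proj (R := ℝ) (φ := fun _ : Fin N => ℝ) i) x := by
    have hsub := hproj.const_sub 1
    refine ((hsub.const_mul (w i i)).add ((hsub.rpow_const_of_eq_zero (by simp [hxi]) hb).fun_mul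
      ((hasFDerivAt_const (degw w Nbr i) x).sub hS.hasFDerivAt))).congr_fderiv ?_
    ext v
    simp [hxi, hzero]
  have hF : (fun y => F w Nbr b y i) = fun y => (w i i * y i + y i ^ b i * wsum w Nbr y i) /
      ((w i i * y i + y i ^ b i * wsum w Nbr y i) +
        (w i i * (1 - y i) + (1 - y i) ^ b i * (degw w Nbr i - wsum w Nbr y i))) := by
    funext y
    simp only [F]
    ring_nf
  rw [hF]
  refine (hnum.hasFDerivAt.div_add_of_eq_zero hrest (by simp [hxi, hzero])
    (by simpa [hxi] using hD)).congr_fderiv ?_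
  simp [hxi, smul_smul, div_eq_inv_mul]

theorem F_eq_self (hb : ∀ i, b i ≠ 0) (hx : ∀ i, x i = 0 ∨ x i = 1)
    (hD : ∀ i, x i = 1 → w i i + wsum w Nbr x i ≠ 0) : F w Nbr b x = x := by
  funext i
  rcases hx i with hxi | hxi
  · rw [F_apply_of_eq_zero (hb i) hxi, hxi]
  · rw [F_apply_of_eq_one (hb i) hxi (hD i hxi), hxi]

variable (w Nbr x) in
/-- At a profile in `{0, 1}ᴺ`, `degw - wsum` and `wsum` are the paper's `d_i^(0)` and `d_i^(1)`,
the weights of the neighbours of `i` holding `0` and `1`. -/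
noncomputable def jacobianDiag (i : Fin N) : ℝ :=
  if x i = 0 then w i i / (w i i + (degw w Nbr i - wsum w Nbr x i))
  else w i i / (w i i + wsum w Nbr x i)

theorem jacobianDiag_mem_Ico (hwii : 0 ≤ w i i) (hx : x i = 0 ∨ x i = 1)
    (hd0 : x i = 0 → 0 < degw w Nbr i - wsum w Nbr x i) (hd1 : x i = 1 → 0 < wsum w Nbr x i) :
    jacobianDiag w Nbr x i ∈ Set.Ico 0 1 := by
  rcases hx with hxi | hxi
  · simpa [jacobianDiag, hxi] using div_add_mem_Ico hwii (hd0 hxi)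
  · simpa [jacobianDiag, hxi] using div_add_mem_Ico hwii (hd1 hxi)

theorem hasFDerivAt_F_apply (hb : 1 < b i) (hwii : 0 ≤ w i i) (hx : x i = 0 ∨ x i = 1)
    (hd0 : x i = 0 → 0 < degw w Nbr i - wsum w Nbr x i) (hd1 : x i = 1 → 0 < wsum w Nbr x i) :
    HasFDerivAt (fun y => F w Nbr b y i)
      (jacobianDiag w Nbr x i •
        ContinuousLinearMap.proj (R := ℝ) (φ := fun _ : Fin N => ℝ) i) x := by
  rcases hx with hxi | hxi
  · rw [jacobianDiag, if_pos hxi]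
    exact hasFDerivAt_F_of_eq_zero hb hxi (by linarith [hd0 hxi])
  · rw [jacobianDiag, if_neg (by simp [hxi])]
    exact hasFDerivAt_F_of_eq_one hb hxi (by linarith [hd1 hxi])

theorem locExpStable_F (hb : ∀ i, 1 < b i) (hwii : ∀ i, 0 ≤ w i i) (hx : ∀ i, x i = 0 ∨ x i = 1)
    (hd0 : ∀ i, x i = 0 → 0 < degw w Nbr i - wsum w Nbr x i)
    (hd1 : ∀ i, x i = 1 → 0 < wsum w Nbr x i) : LocExpStable (F w Nbr b) x := by
  refine locExpStable_of_hasFDerivAt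
    (hasFDerivAt_pi.2 fun i => hasFDerivAt_F_apply (hb i) (hwii i) (hx i) (hd0 i) (hd1 i))
    (F_eq_self (fun i => (zero_lt_one.trans (hb i)).ne') hx fun i hxi => ?_)
    (ContinuousLinearMap.norm_pi_smul_proj_lt_one fun i => ?_)
  · linarith [hwii i, hd1 i hxi]
  · obtain ⟨h0, h1⟩ := jacobianDiag_mem_Ico (hwii i) (hx i) (hd0 i) (hd1 i)
    rwa [Real.norm_eq_abs, abs_of_nonneg h0]

end BiasedAssimilation

section CompleteGraph

variable {N : ℕ} {w : Fin N → Fin N → ℝ} {Nbr : Fin N → Finset (Fin N)}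

theorem degw_of_complete (hw : ∀ i j, i ≠ j → w i j = 1) (hNbr : ∀ i, Nbr i = univ.erase i)
    (i : Fin N) : degw w Nbr i = N - 1 := by
  rw [degw, hNbr, Finset.sum_congr rfl fun j hj => hw i j (Finset.ne_of_mem_erase hj).symm,
    Finset.sum_const, Finset.card_erase_of_mem (mem_univ i), card_univ, Fintype.card_fin,
    nsmul_one, Nat.cast_pred (Fin.pos i)]

theorem wsum_of_complete (hw : ∀ i j, i ≠ j → w i j = 1) (hNbr : ∀ i, Nbr i = univ.erase i)
    (x : Fin N → ℝ) (i : Fin N) : wsum w Nbr x i = ∑ j, x j - x i := by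
  rw [wsum, hNbr, Finset.sum_congr rfl fun j hj => by
    rw [hw i j (Finset.ne_of_mem_erase hj).symm, one_mul], Finset.sum_erase_eq_sub (mem_univ i)]

end CompleteGraph

section PolarizedProfile

variable {N n1 : ℕ} {w : Fin N → Fin N → ℝ} {Nbr : Fin N → Finset (Fin N)} {x : Fin N → ℝ}
  {i : Fin N}

theorem degw_sub_wsum_of_polarized (hw : ∀ i j, i ≠ j → w i j = 1)
    (hNbr : ∀ i, Nbr i = univ.erase i) (hx : ∀ i, x i = 0 ∨ x i = 1)
    (hcard : #{j | x j = 0} = n1) (hxi : x i = 0) :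
    degw w Nbr i - wsum w Nbr x i = (n1 : ℝ) - 1 := by
  have hn1 : n1 ≤ N := hcard ▸ (card_filter_le _ _).trans_eq (card_fin N)
  rw [degw_of_complete hw hNbr, wsum_of_complete hw hNbr, sum_eq_card_sub_card_filter_eq_zero hx,
    Fintype.card_fin, hcard, hxi, Nat.cast_sub hn1]
  ring

theorem wsum_of_polarized (hw : ∀ i j, i ≠ j → w i j = 1)
    (hNbr : ∀ i, Nbr i = univ.erase i) (hx : ∀ i, x i = 0 ∨ x i = 1)
    (hcard : #{j | x j = 0} = n1) (hxi : x i = 1) :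
    wsum w Nbr x i = ((N - n1 : ℕ) : ℝ) - 1 := by
  rw [wsum_of_complete hw hNbr, sum_eq_card_sub_card_filter_eq_zero hx, Fintype.card_fin, hcard,
    hxi]

end PolarizedProfile

theorem stmt17 {N : ℕ} (n1 : ℕ) (hn1 : 2 ≤ n1) (hn2 : n1 ≤ N - 2)
    (w : Fin N → Fin N → ℝ) (hw : ∀ i j, i ≠ j → w i j = 1) (hwii : ∀ i, 0 ≤ w i i)
    (Nbr : Fin N → Finset (Fin N)) (hNbr : ∀ i, Nbr i = Finset.univ.erase i)
    (b : Fin N → ℝ) (hb : ∀ i, 1 < b i)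
    (x : Fin N → ℝ) (hx : ∀ i, x i = 0 ∨ x i = 1)
    (hcard : (Finset.univ.filter (fun i => x i = 0)).card = n1) :
    (∀ i j, fderiv ℝ (fun y => F w Nbr b y i) x (Pi.single j 1) =
      if i = j then
        (if x i = 0 then w i i / (w i i + ((n1 : ℝ) - 1))
         else w i i / (w i i + (((N - n1 : ℕ) : ℝ) - 1)))
      else 0) ∧
    (∀ i, (if x i = 0 then w i i / (w i i + ((n1 : ℝ) - 1))
           else w i i / (w i i + (((N - n1 : ℕ) : ℝ) - 1))) ∈ Set.Ico (0 : ℝ) 1) ∧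
    LocExpStable (F w Nbr b) x := by
  have hd0eq i (hxi : x i = 0) := degw_sub_wsum_of_polarized hw hNbr hx hcard hxi
  have hd1eq i (hxi : x i = 1) := wsum_of_polarized hw hNbr hx hcard hxi
  have hpos0 : 0 < (n1 : ℝ) - 1 := sub_pos.2 (Nat.one_lt_cast.2 hn1)
  have hpos1 : 0 < ((N - n1 : ℕ) : ℝ) - 1 := sub_pos.2 (Nat.one_lt_cast.2 (by omega))
  have hdiag i : jacobianDiag w Nbr x i = if x i = 0 then w i i / (w i i + ((n1 : ℝ) - 1))
      else w i i / (w i i + (((N - n1 : ℕ) : ℝ) - 1)) := by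
    rcases hx i with hxi | hxi
    · simp only [jacobianDiag, if_pos hxi, hd0eq i hxi]
    · simp only [jacobianDiag, hxi, one_ne_zero, if_false, hd1eq i hxi]
  have hd0 i (hxi : x i = 0) : 0 < degw w Nbr i - wsum w Nbr x i := hd0eq i hxi ▸ hpos0
  have hd1 i (hxi : x i = 1) : 0 < wsum w Nbr x i := hd1eq i hxi ▸ hpos1
  refine ⟨fun i j => ?_, fun i => hdiag i ▸ jacobianDiag_mem_Ico (hwii i) (hx i) (hd0 i) (hd1 i),
    locExpStable_F hb hwii hx hd0 hd1⟩
  rw [← hdiag i, (hasFDerivAt_F_apply (hb i) (hwii i) (hx i) (hd0 i) (hd1 i)).fderiv]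
  simp only [smul_apply, ContinuousLinearMap.proj_apply, Pi.single_apply,
    smul_eq_mul, mul_ite, mul_one, mul_zero]
end

section
/- For the biased assimilation model with $b_i = 1$ on the undirected star graph with unit edge weights, the nonnegative Jacobian $P_k$ at an equilibrium $x^* = [1/2, a_2, \dots, a_N]^T$ with $a_i \in (0,1)$ for $2 \le i \le k$ ($k \ge 2$) and $\sum_{i=2}^N a_i = (N-1)/2$ has leading principal $k \times k$ submatrix with diagonal entries $1$, first-row off-diagonal entries $1/(2w_{11}+N-1)$, and first-column entries $4a_i(1-a_i)/(2w_{ii}+1)$, whose spectral radius is strictly greater than $1$; hence the equilibrium is unstable. -/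
open Finset Filter Topology

/-!
At the equilibrium every node satisfies `2 s_i = d_i` (weighted neighbour sum against weighted
degree). There the node update `(W u + u s) / (W + u s + (1 - u) (d - s))` has partial derivatives
`1` in `u` and `4 u (1 - u) / (2 W + d)` in `s`, which gives the Jacobian. Its leading block is an
arrowhead matrix (identity plus a first row `α` and a first column `β`), and `(t, β₂, …, β_k)` is an
eigenvector for the eigenvalue `1 + t`, where `t² = α ∑ βᵢ > 0`.

Instability is proved directly rather than by linearisation. The update moves `u` by
`u (1 - u) (2 s - d)` over its positive denominator, so after pushing the centre slightly above
`1/2` no coordinate ever decreases, and a leaf whose opinion lies in `(0, 1)` gains a fixed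
amount at every step until it leaves any small neighbourhood of the equilibrium.
-/

open scoped Matrix

noncomputable def nodeUpdate (W D u s : ℝ) : ℝ :=
  (W * u + u * s) / (W + u * s + (1 - u) * (D - s))

theorem F_eq_nodeUpdate {N : ℕ} {w : Fin N → Fin N → ℝ} {Nbr : Fin N → Finset (Fin N)}
    {b : Fin N → ℝ} {i : Fin N} (hb : b i = 1) (y : Fin N → ℝ) :
    F w Nbr b y i = nodeUpdate (w i i) (degw w Nbr i) (y i) (wsum w Nbr y i) := by
  simp only [F, nodeUpdate, hb, Real.rpow_one]

theorem nodeUpdate_sub_self {W D u s : ℝ} (hQ : W + u * s + (1 - u) * (D - s) ≠ 0) :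
    nodeUpdate W D u s - u = u * (1 - u) * (2 * s - D) / (W + u * s + (1 - u) * (D - s)) := by
  rw [nodeUpdate, div_sub' hQ]
  ring_nf

theorem nodeUpdate_mem_Icc {W D u s : ℝ} (hW : 0 ≤ W) (hu : u ∈ Set.Icc 0 1) (hD : 0 < D)
    (hDs : D ≤ 2 * s) (hsD : s ≤ D) : nodeUpdate W D u s ∈ Set.Icc u 1 := by
  obtain ⟨hu0, hu1⟩ := hu
  rcases hu0.eq_or_lt with rfl | hu0
  · simp [nodeUpdate]
  have hQ : 0 < W + u * s + (1 - u) * (D - s) := by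
    have := mul_pos hu0 (by linarith : 0 < s)
    have := mul_nonneg (sub_nonneg.2 hu1) (sub_nonneg.2 hsD)
    linarith
  constructor
  · rw [← sub_nonneg, nodeUpdate_sub_self hQ.ne']
    exact div_nonneg (mul_nonneg (mul_nonneg hu0.le (sub_nonneg.2 hu1)) (by linarith)) hQ.le
  · rw [nodeUpdate, div_le_one hQ]
    nlinarith [mul_nonneg hW (sub_nonneg.2 hu1), mul_nonneg (sub_nonneg.2 hu1) (sub_nonneg.2 hsD)]

theorem div_le_nodeUpdate_sub_self {W u s : ℝ} (hW : 0 ≤ W) (hu : u ∈ Set.Ioc 0 1)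
    (hs : s ∈ Set.Icc (1 / 2) 1) :
    u * (1 - u) * (2 * s - 1) / (W + 1) ≤ nodeUpdate W 1 u s - u := by
  obtain ⟨hu0, hu1⟩ := hu
  obtain ⟨hs0, hs1⟩ := hs
  have hQ : 0 < W + u * s + (1 - u) * (1 - s) := by
    nlinarith [mul_pos hu0 (by linarith : 0 < s), mul_nonneg (sub_nonneg.2 hu1) (sub_nonneg.2 hs1)]
  rw [nodeUpdate_sub_self hQ.ne']
  refine div_le_div_of_nonneg_left ?_ hQ ?_
  · exact mul_nonneg (mul_nonneg hu0.le (sub_nonneg.2 hu1)) (by linarith)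
  · nlinarith [mul_nonneg hu0.le (sub_nonneg.2 hs1),
      mul_nonneg (sub_nonneg.2 hu1) (by linarith : 0 ≤ s)]

theorem hasFDerivAt_nodeUpdate {E : Type*} [NormedAddCommGroup E] [NormedSpace ℝ E]
    {u s : E → ℝ} {u' s' : E →L[ℝ] ℝ} {x : E} {W D : ℝ} (hu : HasFDerivAt u u' x)
    (hs : HasFDerivAt s s' x) (hsx : 2 * s x = D) (hWD : 2 * W + D ≠ 0) :
    HasFDerivAt (fun y => nodeUpdate W D (u y) (s y))
      (u' + (4 * u x * (1 - u x) / (2 * W + D)) • s') x := by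
  subst hsx
  have hQ : W + u x * s x + (1 - u x) * (2 * s x - s x) = W + s x := by ring
  have hQ0 : W + s x ≠ 0 := fun h => hWD (by linear_combination 2 * h)
  have hnum := (hu.const_mul W).fun_add (hu.fun_mul hs)
  have hden := ((hu.fun_mul hs).const_add W).fun_add
    (((hasFDerivAt_const 1 x).fun_sub hu).fun_mul ((hasFDerivAt_const (2 * s x) x).fun_sub hs))
  have key := hnum.fun_mul ((hasDerivAt_inv (hQ ▸ hQ0)).comp_hasFDerivAt x hden)
  simp only [nodeUpdate, div_eq_mul_inv]
  refine key.congr_fderiv ?_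
  ext v
  simp only [add_apply, smul_apply, smul_eq_mul, sub_apply, zero_apply, Function.comp_apply, hQ]
  field_simp
  ring

theorem hasFDerivAt_wsum {N : ℕ} (w : Fin N → Fin N → ℝ) (Nbr : Fin N → Finset (Fin N))
    (x : Fin N → ℝ) (i : Fin N) :
    HasFDerivAt (fun y => wsum w Nbr y i)
      (∑ j ∈ Nbr i, w i j • ContinuousLinearMap.proj (R := ℝ) (φ := fun _ : Fin N => ℝ) j) x :=
  HasFDerivAt.fun_sum fun j _ => (hasFDerivAt_apply j x).const_mul (w i j)

theorem fderiv_F_apply {N : ℕ} {w : Fin N → Fin N → ℝ} {Nbr : Fin N → Finset (Fin N)}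
    {b : Fin N → ℝ} {x : Fin N → ℝ} {i : Fin N} (hb : b i = 1)
    (hx : 2 * wsum w Nbr x i = degw w Nbr i) (hWD : 2 * w i i + degw w Nbr i ≠ 0)
    (v : Fin N → ℝ) :
    fderiv ℝ (fun y => F w Nbr b y i) x v =
      v i + 4 * x i * (1 - x i) / (2 * w i i + degw w Nbr i) * wsum w Nbr v i := by
  simp only [F_eq_nodeUpdate hb]
  rw [(hasFDerivAt_nodeUpdate (hasFDerivAt_apply i x) (hasFDerivAt_wsum w Nbr x i) hx hWD).fderiv]
  simp [wsum]

theorem exists_lt_of_add_le_succ {u : ℕ → ℝ} {γ : ℝ} (hγ : 0 < γ)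
    (hu : ∀ t, u t + γ ≤ u (t + 1)) (B : ℝ) : ∃ t, B < u t := by
  have hlin : ∀ t : ℕ, u 0 + t * γ ≤ u t := by
    intro t
    induction t with
    | zero => simp
    | succ t ih => push_cast; linarith [hu t]
  obtain ⟨t, ht⟩ := exists_nat_gt ((B - u 0) / γ)
  rw [div_lt_iff₀ hγ] at ht
  exact ⟨t, by linarith [hlin t]⟩

theorem abs_le_specRad {n : ℕ} {M : Matrix (Fin n) (Fin n) ℝ} {v : Fin n → ℝ} {r : ℝ}
    (hv : v ≠ 0) (hMv : M *ᵥ v = r • v) : |r| ≤ specRad M := by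
  have hroot : M.charpoly.IsRoot r := by
    rw [Polynomial.IsRoot, Matrix.eval_charpoly, ← Matrix.exists_mulVec_eq_zero_iff]
    exact ⟨v, hv, by simp [Matrix.sub_mulVec, hMv]⟩
  have hroot' : (M.map (fun a => (a : ℂ))).charpoly.IsRoot r := by
    rw [show M.map (fun a => (a : ℂ)) = M.map (algebraMap ℝ ℂ) from rfl, Matrix.charpoly_map]
    exact hroot.map
  have hbdd : BddAbove
      {s : ℝ | ∃ μ : ℂ, (M.map (fun a => (a : ℂ))).charpoly.IsRoot μ ∧ s = ‖μ‖} := by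
    refine ((Polynomial.finite_setOfPred_isRoot
      (Matrix.charpoly_monic (M.map (fun a => (a : ℂ)))).ne_zero).image (‖·‖)).bddAbove.mono ?_
    rintro _ ⟨μ, hμ, rfl⟩
    exact ⟨μ, hμ, rfl⟩
  exact le_csSup hbdd ⟨r, hroot', by simp⟩

section Arrowhead

variable {ι : Type*} [DecidableEq ι]

def arrowhead (i₀ : ι) (α : ℝ) (β : ι → ℝ) : Matrix ι ι ℝ :=
  Matrix.of fun i j => if i = j then 1 else if i = i₀ then α else if j = i₀ then β i else 0

theorem arrowhead_nonneg {i₀ : ι} {α : ℝ} {β : ι → ℝ} (hα : 0 ≤ α)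
    (hβ : ∀ i, i ≠ i₀ → 0 ≤ β i) (i j : ι) : 0 ≤ arrowhead i₀ α β i j := by
  simp only [arrowhead, Matrix.of_apply]
  split_ifs with hij hi hj
  exacts [zero_le_one, hα, hβ i hi, le_rfl]

theorem arrowhead_mulVec_update [Fintype ι] {i₀ : ι} {α t : ℝ} {β : ι → ℝ}
    (ht : t ^ 2 = α * ∑ j ∈ univ.erase i₀, β j) :
    arrowhead i₀ α β *ᵥ Function.update β i₀ t = (1 + t) • Function.update β i₀ t := by
  ext i
  simp only [Matrix.mulVec, dotProduct, arrowhead, Matrix.of_apply, Pi.smul_apply, smul_eq_mul]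
  by_cases hi : i = i₀
  · subst hi
    have hrow : ∀ j ∈ univ.erase i, (if i = j then 1 else if i = i then α
        else if j = i then β i else 0) * Function.update β i t j = α * β j := fun j hj => by
      simp [(ne_of_mem_erase hj).symm, ne_of_mem_erase hj]
    rw [← add_sum_erase _ _ (mem_univ i), sum_congr rfl hrow, ← mul_sum, ← ht]
    simp
    ring
  · rw [Finset.sum_eq_add i i₀ hi ?_ (by simp) (by simp)]
    · simp [hi]
      ring
    · intro j _ hj
      simp [Ne.symm hj.1, hj.2, hi]

end Arrowhead

theorem one_lt_specRad_arrowhead {n : ℕ} {i₀ : Fin n} {α : ℝ} {β : Fin n → ℝ}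
    (h : 0 < α * ∑ j ∈ univ.erase i₀, β j) : 1 < specRad (arrowhead i₀ α β) := by
  set t := √(α * ∑ j ∈ univ.erase i₀, β j)
  have ht : 0 < t := Real.sqrt_pos.2 h
  have hv : Function.update β i₀ t ≠ 0 := fun h0 => ht.ne' (by simpa using congrFun h0 i₀)
  calc 1 < |1 + t| := by rw [abs_of_pos (by linarith)]; linarith
    _ ≤ _ := abs_le_specRad hv (arrowhead_mulVec_update (Real.sq_sqrt h.le))

section Star

variable {N : ℕ} {c : Fin N} {Nbr : Fin N → Finset (Fin N)} {w : Fin N → Fin N → ℝ}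
  {b : Fin N → ℝ} {x : Fin N → ℝ}

theorem wsum_center (hNbrC : Nbr c = univ.erase c) (hw : ∀ i j, i ≠ j → w i j = 1)
    (y : Fin N → ℝ) : wsum w Nbr y c = ∑ j ∈ univ.erase c, y j := by
  rw [wsum, hNbrC]
  exact sum_congr rfl fun j hj => by rw [hw c j (ne_of_mem_erase hj).symm, one_mul]

theorem degw_center (hNbrC : Nbr c = univ.erase c) (hw : ∀ i j, i ≠ j → w i j = 1) :
    degw w Nbr c = N - 1 := by
  rw [degw, hNbrC, sum_congr rfl fun j hj => hw c j (ne_of_mem_erase hj).symm, sum_const,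
    card_erase_of_mem (mem_univ c), card_univ, Fintype.card_fin, nsmul_one, Nat.cast_pred c.pos]

theorem wsum_leaf {i : Fin N} (hic : i ≠ c) (hNbrL : Nbr i = {c})
    (hw : ∀ i j, i ≠ j → w i j = 1) (y : Fin N → ℝ) : wsum w Nbr y i = y c := by
  rw [wsum, hNbrL, sum_singleton, hw i c hic, one_mul]

theorem degw_leaf {i : Fin N} (hic : i ≠ c) (hNbrL : Nbr i = {c})
    (hw : ∀ i j, i ≠ j → w i j = 1) : degw w Nbr i = 1 := by
  rw [degw, hNbrL, sum_singleton, hw i c hic]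

theorem fderiv_F_star (hN : 2 ≤ N) (hNbrC : Nbr c = univ.erase c)
    (hNbrL : ∀ i, i ≠ c → Nbr i = {c}) (hw : ∀ i j, i ≠ j → w i j = 1)
    (hwii : ∀ i, 0 ≤ w i i) (hb : ∀ i, b i = 1) (hxc : x c = 1 / 2)
    (hsum : ∑ i ∈ univ.erase c, x i = ((N : ℝ) - 1) / 2) (i m : Fin N) :
    fderiv ℝ (fun y => F w Nbr b y i) x (Pi.single m 1) =
      if m = i then 1 else if i = c then 1 / (2 * w c c + (N : ℝ) - 1)
      else if m = c then 4 * x i * (1 - x i) / (2 * w i i + 1) else 0 := by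
  have hW := hwii i
  by_cases hic : i = c
  · subst hic
    have hN' : (2 : ℝ) ≤ N := by exact_mod_cast hN
    rw [fderiv_F_apply (hb i) (by rw [wsum_center hNbrC hw, degw_center hNbrC hw, hsum]; ring)
      (by rw [degw_center hNbrC hw]; linarith), wsum_center hNbrC hw, degw_center hNbrC hw,
      hxc, sum_pi_single']
    by_cases hmi : m = i
    · simp [hmi]
    · simp [hmi]
      ring
  · rw [fderiv_F_apply (hb i) (by rw [wsum_leaf hic (hNbrL i hic) hw,
      degw_leaf hic (hNbrL i hic) hw, hxc]; norm_num)
      (by rw [degw_leaf hic (hNbrL i hic) hw]; linarith), wsum_leaf hic (hNbrL i hic) hw,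
      degw_leaf hic (hNbrL i hic) hw]
    by_cases hmi : m = i
    · simp [hmi, hic]
    · by_cases hmc : m = c
      · simp [hmc, hic, Ne.symm hic]
      · simp [hmi, hmc, hic]

theorem mapsTo_F_star_Icc (hN : 2 ≤ N) (hNbrC : Nbr c = univ.erase c)
    (hNbrL : ∀ i, i ≠ c → Nbr i = {c}) (hw : ∀ i j, i ≠ j → w i j = 1)
    (hwii : ∀ i, 0 ≤ w i i) (hb : ∀ i, b i = 1) (hx01 : ∀ j, j ≠ c → x j ∈ Set.Icc 0 1)
    (hsum : ∑ i ∈ univ.erase c, x i = ((N : ℝ) - 1) / 2) {x₀ : Fin N → ℝ}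
    (hx₀ : ∀ j, j ≠ c → x j ≤ x₀ j) (hx₀c : 1 / 2 ≤ x₀ c) :
    Set.MapsTo (F w Nbr b) (Set.Icc x₀ 1) (Set.Icc x₀ 1) := by
  rintro y ⟨hx₀y, hy1⟩
  have hxy : ∀ j, j ≠ c → x j ≤ y j := fun j hj => (hx₀ j hj).trans (hx₀y j)
  have hstep : ∀ i, F w Nbr b y i ∈ Set.Icc (y i) 1 := by
    intro i
    rw [F_eq_nodeUpdate (hb i)]
    by_cases hic : i = c
    · subst hic
      have hN' : (2 : ℝ) ≤ N := by exact_mod_cast hN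
      rw [wsum_center hNbrC hw, degw_center hNbrC hw]
      refine nodeUpdate_mem_Icc (hwii i) ⟨by linarith [hx₀y i], hy1 i⟩ (by linarith) ?_ ?_
      · have := sum_le_sum fun j (hj : j ∈ univ.erase i) => hxy j (ne_of_mem_erase hj)
        linarith
      · have := sum_le_sum fun j (_ : j ∈ univ.erase i) => hy1 j
        simpa [card_erase_of_mem, Nat.cast_pred (by omega : 0 < N)] using this
    · rw [wsum_leaf hic (hNbrL i hic) hw, degw_leaf hic (hNbrL i hic) hw]
      exact nodeUpdate_mem_Icc (hwii i) ⟨(hx01 i hic).1.trans (hxy i hic), hy1 i⟩ one_pos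
        (by linarith [hx₀y c]) (hy1 c)
  exact ⟨fun i => (hx₀y i).trans (hstep i).1, fun i => (hstep i).2⟩

theorem add_le_F_star_leaf {l : Fin N} (hlc : l ≠ c) (hNbrL : Nbr l = {c})
    (hw : ∀ i j, i ≠ j → w i j = 1) (hwll : 0 ≤ w l l) (hb : b l = 1) {a h : ℝ} (ha : 0 < a)
    (hh : 0 ≤ h) {y : Fin N → ℝ} (hyl : y l ∈ Set.Icc a ((1 + a) / 2))
    (hyc : y c ∈ Set.Icc (1 / 2 + h) 1) :
    y l + a * (1 - (1 + a) / 2) * (2 * h) / (w l l + 1) ≤ F w Nbr b y l := by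
  obtain ⟨hal, hla⟩ := hyl
  obtain ⟨hhc, hc1⟩ := hyc
  have hgain := div_le_nodeUpdate_sub_self (u := y l) (s := y c) hwll ⟨by linarith, by linarith⟩
    ⟨by linarith, hc1⟩
  rw [F_eq_nodeUpdate hb, wsum_leaf hlc hNbrL hw, degw_leaf hlc hNbrL hw]
  have : a * (1 - (1 + a) / 2) * (2 * h) / (w l l + 1) ≤
      y l * (1 - y l) * (2 * y c - 1) / (w l l + 1) := by
    gcongr <;> nlinarith
  linarith

theorem not_lyapStable_F_star (hNbrC : Nbr c = univ.erase c)
    (hNbrL : ∀ i, i ≠ c → Nbr i = {c}) (hw : ∀ i j, i ≠ j → w i j = 1)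
    (hwii : ∀ i, 0 ≤ w i i) (hb : ∀ i, b i = 1) (hxc : x c = 1 / 2)
    (hx01 : ∀ j, j ≠ c → x j ∈ Set.Icc 0 1)
    (hsum : ∑ i ∈ univ.erase c, x i = ((N : ℝ) - 1) / 2) {l : Fin N} (hlc : l ≠ c)
    (hl : x l ∈ Set.Ioo 0 1) : ¬ LyapStable (F w Nbr b) x := by
  intro hL
  have hN : 2 ≤ N := (Fintype.one_lt_card_iff.2 ⟨l, c, hlc⟩).trans_eq (Fintype.card_fin N)
  obtain ⟨ha0, ha1⟩ := hl
  obtain ⟨δ, hδ, hstab⟩ := hL ((1 - x l) / 2) (by linarith)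
  set h := min (δ / 2) (1 / 2)
  have hh : 0 < h := lt_min (by linarith) (by norm_num)
  set x₀ := x + Pi.single c h
  have hx₀ : ‖x₀ - x‖ < δ := by
    rw [add_sub_cancel_left, Pi.norm_single, Real.norm_of_nonneg hh.le]
    linarith [min_le_left (δ / 2) (1 / 2)]
  have hx₀1 : x₀ ≤ 1 := fun j => by
    by_cases hj : j = c
    · subst hj
      simp only [x₀, Pi.add_apply, Pi.single_eq_same, Pi.one_apply, hxc]
      linarith [min_le_right (δ / 2) (1 / 2)]
    · simpa [x₀, hj] using (hx01 j hj).2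
  set y : ℕ → Fin N → ℝ := fun t => (F w Nbr b)^[t] x₀
  have hbox : ∀ t, y t ∈ Set.Icc x₀ 1 := fun t =>
    (mapsTo_F_star_Icc hN hNbrC hNbrL hw hwii hb hx01 hsum (fun j hj => by simp [x₀, hj])
      (by simp [x₀, hxc, hh.le])).iterate t ⟨le_rfl, hx₀1⟩
  have hnear : ∀ t, y t l ≤ (1 + x l) / 2 := fun t => by
    have := (norm_le_pi_norm (y t - x) l).trans_lt (hstab x₀ hx₀ t)
    rw [Pi.sub_apply, Real.norm_eq_abs] at this
    linarith [le_abs_self (y t l - x l)]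
  have hγ : 0 < x l * (1 - (1 + x l) / 2) * (2 * h) / (w l l + 1) :=
    div_pos (mul_pos (mul_pos ha0 (by linarith)) (by linarith)) (by linarith [hwii l])
  have hgain : ∀ t, y t l + x l * (1 - (1 + x l) / 2) * (2 * h) / (w l l + 1) ≤ y (t + 1) l := by
    intro t
    obtain ⟨hlo, hhi⟩ := hbox t
    rw [show y (t + 1) = F w Nbr b (y t) from Function.iterate_succ_apply' _ _ _]
    exact add_le_F_star_leaf hlc (hNbrL l hlc) hw (hwii l) (hb l) ha0 hh.le
      ⟨by simpa [x₀, hlc] using hlo l, hnear t⟩ ⟨by simpa [x₀, hxc] using hlo c, hhi c⟩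
  obtain ⟨t, ht⟩ := exists_lt_of_add_le_succ hγ hgain 1
  exact ht.not_ge ((hbox t).2 l)

end Star

theorem stmt19 {N k : ℕ} (hk : 2 ≤ k) (hkN : k ≤ N)
    (c : Fin N) (hc : c.val = 0)
    (Nbr : Fin N → Finset (Fin N))
    (hNbrC : Nbr c = Finset.univ.erase c) (hNbrL : ∀ i, i ≠ c → Nbr i = {c})
    (w : Fin N → Fin N → ℝ) (hw : ∀ i j, i ≠ j → w i j = 1) (hwii : ∀ i, 0 ≤ w i i)
    (b : Fin N → ℝ) (hb : ∀ i, b i = 1)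
    (x : Fin N → ℝ) (hxc : x c = 1/2)
    (hmid : ∀ i : Fin N, i ≠ c → i.val < k → x i ∈ Set.Ioo (0 : ℝ) 1)
    (hext : ∀ i : Fin N, k ≤ i.val → x i = 0 ∨ x i = 1)
    (hsum : ∑ i ∈ Finset.univ.erase c, x i = ((N : ℝ) - 1) / 2) :
    let Pk : Matrix (Fin k) (Fin k) ℝ := fun i j =>
      if i = j then 1
      else if i.val = 0 then 1 / (2 * w c c + (N : ℝ) - 1)
      else if j.val = 0 then
        4 * x (Fin.castLE hkN i) * (1 - x (Fin.castLE hkN i)) /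
          (2 * w (Fin.castLE hkN i) (Fin.castLE hkN i) + 1)
      else 0
    (∀ i j, 0 ≤ Pk i j) ∧
    (∀ i j : Fin k, fderiv ℝ (fun y => F w Nbr b y (Fin.castLE hkN i)) x
        (Pi.single (Fin.castLE hkN j) 1) = Pk i j) ∧
    1 < specRad Pk ∧
    ¬ LyapStable (F w Nbr b) x := by
  intro Pk
  have hN : 2 ≤ N := hk.trans hkN
  set z₀ : Fin k := ⟨0, by omega⟩
  set z₁ : Fin k := ⟨1, by omega⟩
  have hcast : ∀ i : Fin k, Fin.castLE hkN i = c ↔ i = z₀ := by simp [Fin.ext_iff, hc, z₀]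
  have hx01 : ∀ j, j ≠ c → x j ∈ Set.Icc 0 1 := fun j hj => by
    by_cases hjk : j.val < k
    · exact Set.Ioo_subset_Icc_self (hmid j hj hjk)
    · rcases hext j (by omega) with h | h <;> simp [h]
  set α := 1 / (2 * w c c + (N : ℝ) - 1)
  set β : Fin k → ℝ := fun i => 4 * x (Fin.castLE hkN i) * (1 - x (Fin.castLE hkN i)) /
    (2 * w (Fin.castLE hkN i) (Fin.castLE hkN i) + 1)
  have hPk : Pk = arrowhead z₀ α β := by
    ext i j
    simp [Pk, arrowhead, Fin.ext_iff, z₀, α, β]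
  have hα : 0 < α := one_div_pos.2 (by
    have : (2 : ℝ) ≤ N := by exact_mod_cast hN
    linarith [hwii c])
  have hmid' : ∀ i : Fin k, i ≠ z₀ → x (Fin.castLE hkN i) ∈ Set.Ioo 0 1 := fun i hi =>
    hmid _ (mt (hcast i).1 hi) (by simp)
  have hβ : ∀ i, i ≠ z₀ → 0 < β i := fun i hi =>
    div_pos (mul_pos (mul_pos (by norm_num) (hmid' i hi).1) (sub_pos.2 (hmid' i hi).2))
      (by linarith [hwii (Fin.castLE hkN i)])
  have hz₁ : z₁ ≠ z₀ := by simp [z₁, z₀]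
  refine ⟨hPk ▸ arrowhead_nonneg hα.le fun i hi => (hβ i hi).le, fun i j => ?_, ?_,
    not_lyapStable_F_star hNbrC hNbrL hw hwii hb hxc hx01 hsum (mt (hcast z₁).1 hz₁)
      (hmid' z₁ hz₁)⟩
  · rw [fderiv_F_star hN hNbrC hNbrL hw hwii hb hxc hsum, hPk]
    simp [arrowhead, hcast, eq_comm, α, β]
  · rw [hPk]
    exact one_lt_specRad_arrowhead (mul_pos hα
      (sum_pos (fun i hi => hβ i (ne_of_mem_erase hi)) ⟨z₁, mem_erase.2 ⟨hz₁, mem_univ _⟩⟩))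
end
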